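/- arXiv:1409.7986 — 2 statements merged into one kernel-verified Lean document; each statement's English description precedes it below -/
import Mathlib

section
/- For any real x ≥ 1 and any real ξ with 0 < ξ ≤ 0.4, and any natural numbers j, k with 1.6·j/ξ ≤ k < 1.6·(j+1)/ξ, we have (1+ξ)^k + (1+ξ)^{-k} ≥ 2(j+1). -/
/-- For `0 < ξ ≤ 0.4` and naturals `j, k` with `1.6·j/ξ ≤ k < 1.6·(j+1)/ξ`,
`(1+ξ)^k + (1+ξ)^{-k} ≥ 2(j+1)`. -/
theorem stmt2 (x ξ : ℝ) (hx : 1 ≤ x) (hξ : 0 < ξ) (hξ' : ξ ≤ 0.4) (j k : ℕ)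
    (h1 : 1.6 * (j : ℝ) / ξ ≤ k) (h2 : (k : ℝ) < 1.6 * ((j : ℝ) + 1) / ξ) :
    (1 + ξ) ^ (k : ℤ) + (1 + ξ) ^ (-(k : ℤ)) ≥ 2 * ((j : ℝ) + 1) := by
  have ha : (1:ℝ) < 1 + ξ := by linarith
  have ha0 : (0:ℝ) < 1 + ξ := by linarith
  have hk0 : (0:ℝ) < (1 + ξ) ^ k := pow_pos ha0 k
  rw [zpow_neg, zpow_natCast]
  -- concavity of log: log(1+ξ) ≥ 2.5 * log 1.4 * ξ on (0, 0.4]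
  have hlog : 2.5 * Real.log 1.4 * ξ ≤ Real.log (1 + ξ) := by
    have hm1 : (1:ℝ) ∈ Set.Ioi (0:ℝ) := Set.mem_Ioi.mpr one_pos
    have hm2 : (1.4:ℝ) ∈ Set.Ioi (0:ℝ) := Set.mem_Ioi.mpr (by norm_num)
    have hA : (0:ℝ) ≤ 1 - 2.5 * ξ := by linarith
    have hB : (0:ℝ) ≤ 2.5 * ξ := by linarith
    have hAB : (1 - 2.5 * ξ) + 2.5 * ξ = 1 := by ring
    have hc := strictConcaveOn_log_Ioi.concaveOn.2 hm1 hm2 hA hB hAB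
    simp only [smul_eq_mul, Real.log_one, mul_zero, zero_add] at hc
    have : (1 - 2.5 * ξ) * 1 + 2.5 * ξ * 1.4 = 1 + ξ := by ring
    rw [this] at hc
    linarith
  have hloga : 0 < Real.log (1 + ξ) := Real.log_pos ha
  have hkl : ((4 * j : ℕ) : ℝ) * Real.log 1.4 ≤ (k : ℝ) * Real.log (1 + ξ) := by
    have hstep1 : (1.6 * j / ξ) * Real.log (1 + ξ) ≤ (k : ℝ) * Real.log (1 + ξ) :=
      mul_le_mul_of_nonneg_right h1 hloga.le
    have hstep2 : (1.6 * j / ξ) * (2.5 * Real.log 1.4 * ξ) ≤ (1.6 * j / ξ) * Real.log (1 + ξ) := by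
      apply mul_le_mul_of_nonneg_left hlog
      positivity
    have heq : (1.6 * j / ξ) * (2.5 * Real.log 1.4 * ξ) = ((4 * j : ℕ) : ℝ) * Real.log 1.4 := by
      push_cast
      field_simp
      ring
    linarith
  have hyb : (1.4 : ℝ) ^ (4 * j) ≤ (1 + ξ) ^ k := by
    have e1 : (1 + ξ) ^ k = Real.exp ((k : ℝ) * Real.log (1 + ξ)) := by
      rw [← Real.log_pow, Real.exp_log hk0]
    have e2 : ((1.4 : ℝ)) ^ (4 * j) = Real.exp (((4 * j : ℕ) : ℝ) * Real.log 1.4) := by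
      rw [← Real.log_pow, Real.exp_log (by positivity)]
    rw [e1, e2]
    exact Real.exp_le_exp.mpr hkl
  have hinv : (1 + ξ) ^ k * ((1 + ξ) ^ k)⁻¹ = 1 := mul_inv_cancel₀ (ne_of_gt hk0)
  have hinvpos : 0 < ((1 + ξ) ^ k)⁻¹ := inv_pos.2 hk0
  rcases j with _ | _ | n
  · -- j = 0
    push_cast
    nlinarith [sq_nonneg ((1 + ξ) ^ k - 1)]
  · -- j = 1
    have hyb' : (3.8416 : ℝ) ≤ (1 + ξ) ^ k := by
      have : (1.4 : ℝ) ^ (4 * 1) = 3.8416 := by norm_num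
      rw [this] at hyb
      exact hyb
    push_cast
    nlinarith [hinv, hinvpos, hyb', hk0]
  · -- j ≥ 2
    have hpow : 2 * ((n : ℝ) + 2 + 1) ≤ (1.4 : ℝ) ^ (4 * (n + 2)) := by
      have h := one_add_mul_le_pow (by norm_num : (-2 : ℝ) ≤ 2.8416) (n + 2)
      have e : ((1.4 : ℝ)) ^ (4 * (n + 2)) = ((1 : ℝ) + 2.8416) ^ (n + 2) := by
        rw [pow_mul]
        norm_num
      rw [e]
      push_cast at h ⊢
      nlinarith [Nat.cast_nonneg (α := ℝ) n]
    push_cast at hpow hyb ⊢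
    nlinarith [hinvpos, hyb, hpow]
end

section
/- Let γ, Δ, ε > 0, ξ ∈ (0, 0.4], and let (n_i) be an increasing sequence with n_{i+1} ≤ (1+ξ)n_i. Suppose N is an index such that for all i with n_i ≥ N, we have P(T > n_i) ≤ exp(-γ n_i Δ²/4), where T is a stopping time taking values in {n_i} with T ≥ n_1 and exp(-γ(N+1)Δ²/4) ≤ ε·exp(-γΔ²/4). Then E(T) ≤ (1+ξ)(N + 4ε/(γΔ²)). -/
/-!
By the layer-cake formula, `E T = ∫₀^∞ P(T > t) dt`. Bound `P(T > t)` by `1` for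
`t ≤ (1 + ξ) N`; beyond that, `t` lies in a grid interval `[n m, n (m+1))` with
`n m ≥ t / (1 + ξ) > N`, so `P(T > t) ≤ P(T > n m) ≤ exp (-c t / (1 + ξ))` with `c = γΔ²/4`.
Integrating gives `E T ≤ (1 + ξ) (N + exp (-c N) / c)`, and the hypothesis on `N` says
exactly `exp (-c N) ≤ ε`.
-/

open MeasureTheory Set Real

theorem lintegral_Ioi_exp_neg_mul {b : ℝ} (hb : 0 < b) (A : ℝ) :
    ∫⁻ t in Ioi A, ENNReal.ofReal (exp (-b * t)) = ENNReal.ofReal (exp (-b * A) / b) := by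
  rw [← ofReal_integral_eq_lintegral_ofReal (exp_neg_integrableOn_Ioi A hb)
    (ae_of_all _ fun t ↦ (exp_pos _).le), integral_exp_mul_Ioi (neg_lt_zero.mpr hb), neg_div_neg_eq]

theorem integral_le_of_measureReal_lt_le_exp {Ω : Type*} [MeasurableSpace Ω] {μ : Measure Ω}
    [IsProbabilityMeasure μ] {X : Ω → ℝ} {A b : ℝ} (hX : 0 ≤ᵐ[μ] X) (hA : 0 ≤ A) (hb : 0 < b)
    (htail : ∀ t, A < t → μ.real {ω | t < X ω} ≤ exp (-b * t)) :
    ∫ ω, X ω ∂μ ≤ A + exp (-b * A) / b := by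
  have hbound : 0 ≤ A + exp (-b * A) / b := by positivity
  by_cases hXm : AEStronglyMeasurable X μ
  swap
  · rwa [integral_non_aestronglyMeasurable hXm]
  have hlayer : ∫⁻ t in Ioi 0, μ {ω | t < X ω}
      ≤ ENNReal.ofReal A + ENNReal.ofReal (exp (-b * A) / b) := by
    rw [← Ioc_union_Ioi_eq_Ioi hA, lintegral_union measurableSet_Ioi Ioc_disjoint_Ioi_same]
    gcongr
    · calc ∫⁻ t in Ioc 0 A, μ {ω | t < X ω} ≤ ∫⁻ _ in Ioc 0 A, 1 :=
            setLIntegral_mono measurable_const fun _ _ ↦ prob_le_one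
        _ = ENNReal.ofReal A := by simp
    · rw [← lintegral_Ioi_exp_neg_mul hb A]
      refine setLIntegral_mono (by fun_prop) fun t ht ↦ ?_
      rw [← ofReal_measureReal]
      exact ENNReal.ofReal_le_ofReal (htail t ht)
  rw [integral_eq_lintegral_of_nonneg_ae hX hXm,
    lintegral_eq_lintegral_meas_lt μ hX hXm.aemeasurable]
  exact ENNReal.toReal_le_of_le_ofReal hbound
    (hlayer.trans_eq (ENNReal.ofReal_add hA (by positivity)).symm)

theorem exists_le_and_lt_succ {n : ℕ → ℝ} {t : ℝ} (h0 : n 0 ≤ t) (hex : ∃ j, t < n j) :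
    ∃ m, n m ≤ t ∧ t < n (m + 1) := by
  classical
  have hpos : Nat.find hex ≠ 0 := fun h ↦ (Nat.find_spec hex).not_ge (h ▸ h0)
  obtain ⟨m, hm⟩ := Nat.exists_eq_succ_of_ne_zero hpos
  have hspec := Nat.find_spec hex
  rw [hm] at hspec
  exact ⟨m, not_lt.mp (Nat.find_min hex (hm ▸ m.lt_succ_self)), hspec⟩

theorem measureReal_lt_le_exp_of_grid {Ω : Type*} [MeasurableSpace Ω] {μ : Measure Ω}
    [IsFiniteMeasure μ] {T : Ω → ℝ} {n : ℕ → ℝ} {N c q t : ℝ} (hq : 0 < q) (hc : 0 ≤ c)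
    (hgrow : ∀ i, n (i + 1) ≤ q * n i) (hT : ∀ ω, ∃ i, T ω = n i)
    (htail : ∀ i, N ≤ n i → μ.real {ω | n i < T ω} ≤ exp (-(c * n i)))
    (h0 : n 0 ≤ t) (ht : q * N < t) :
    μ.real {ω | t < T ω} ≤ exp (-(c / q) * t) := by
  by_cases hex : ∃ j, t < n j
  · obtain ⟨m, hmt, htm⟩ := exists_le_and_lt_succ h0 hex
    have hqm : t < q * n m := htm.trans_le (hgrow m)
    have hNm : N ≤ n m := (lt_of_mul_lt_mul_left (ht.trans hqm) hq.le).le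
    calc μ.real {ω | t < T ω} ≤ μ.real {ω | n m < T ω} :=
          measureReal_mono fun ω hω ↦ hmt.trans_lt hω
      _ ≤ exp (-(c * n m)) := htail m hNm
      _ ≤ exp (-(c / q) * t) := by
          gcongr
          rw [neg_mul, neg_le_neg_iff, div_mul_eq_mul_div, div_le_iff₀ hq]
          nlinarith
  · push Not at hex
    have hempty : {ω | t < T ω} = ∅ := by
      ext ω
      obtain ⟨i, hi⟩ := hT ω
      simpa [hi] using hex i
    rw [hempty, measureReal_empty]
    exact (exp_pos _).le

theorem lt_of_measureReal_lt_le_exp {Ω : Type*} [MeasurableSpace Ω] {μ : Measure Ω}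
    [IsProbabilityMeasure μ] {T : Ω → ℝ} {a c N : ℝ} (hca : 0 < c * a) (hT : ∀ ω, a < T ω)
    (htail : N ≤ a → μ.real {ω | a < T ω} ≤ exp (-(c * a))) : a < N := by
  by_contra! hN
  have huniv : {ω | a < T ω} = univ := eq_univ_of_forall hT
  have := htail hN
  rw [huniv, probReal_univ] at this
  exact (exp_lt_one_iff.mpr (neg_lt_zero.mpr hca)).not_ge this

theorem stmt8_general {Ω' : Type*} [MeasurableSpace Ω'] (ℙ : Measure Ω') [IsProbabilityMeasure ℙ]
    (γ Δ ε ξ : ℝ) (hγ : 0 < γ) (hΔ : 0 < Δ) (hξ : 0 < ξ)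
    (n : ℕ → ℝ) (hpos : ∀ i, 0 < n i) (hmono : StrictMono n)
    (hgrow : ∀ i, n (i + 1) ≤ (1 + ξ) * n i)
    (N : ℝ) (T : Ω' → ℝ)
    (hTval : ∀ ω, ∃ i, T ω = n i) (hT1 : ∀ ω, n 1 ≤ T ω)
    (htail : ∀ i, N ≤ n i →
      (ℙ {ω | T ω > n i}).toReal ≤ Real.exp (-(γ * n i * Δ ^ 2 / 4)))
    (hN : Real.exp (-(γ * (N + 1) * Δ ^ 2 / 4)) ≤ ε * Real.exp (-(γ * Δ ^ 2 / 4))) :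
    ∫ ω, T ω ∂ℙ ≤ (1 + ξ) * (N + 4 * ε / (γ * Δ ^ 2)) := by
  obtain ⟨c, hc_def⟩ : ∃ c, c = γ * Δ ^ 2 / 4 := ⟨_, rfl⟩
  have hc : 0 < c := by rw [hc_def]; positivity
  have hq : 0 < 1 + ξ := by linarith
  have htail' (i : ℕ) (hi : N ≤ n i) : ℙ.real {ω | n i < T ω} ≤ exp (-(c * n i)) :=
    (htail i hi).trans_eq (congrArg exp (by rw [hc_def]; ring))
  have hn0N : n 0 < N := lt_of_measureReal_lt_le_exp (mul_pos hc (hpos 0))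
    (fun ω ↦ (hmono zero_lt_one).trans_le (hT1 ω)) (htail' 0)
  have hN0 : 0 < N := (hpos 0).trans hn0N
  have hNq : N ≤ (1 + ξ) * N := by nlinarith
  have hεN : exp (-(c * N)) ≤ ε := by
    refine le_of_mul_le_mul_right (hN.trans_eq' ?_) (exp_pos _)
    rw [← exp_add, hc_def]
    ring_nf
  calc ∫ ω, T ω ∂ℙ
      ≤ (1 + ξ) * N + exp (-(c / (1 + ξ)) * ((1 + ξ) * N)) / (c / (1 + ξ)) :=
        integral_le_of_measureReal_lt_le_exp (ae_of_all _ fun ω ↦ (hpos 1).le.trans (hT1 ω))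
          (by positivity) (by positivity) fun t ht ↦
          measureReal_lt_le_exp_of_grid hq hc.le hgrow hTval htail' (by linarith) ht
    _ = (1 + ξ) * (N + exp (-(c * N)) / c) := by
        field_simp
    _ ≤ (1 + ξ) * (N + ε / c) := by gcongr
    _ = (1 + ξ) * (N + 4 * ε / (γ * Δ ^ 2)) := by
        rw [hc_def]
        field_simp

/-- Expected stopping time bound for the sequential test without indifference region. -/
theorem stmt8 {Ω' : Type*} [MeasurableSpace Ω'] (ℙ : Measure Ω') [IsProbabilityMeasure ℙ]
    (γ Δ ε ξ : ℝ) (hγ : 0 < γ) (hΔ : 0 < Δ) (hε : 0 < ε) (hξ : 0 < ξ) (hξ' : ξ ≤ 0.4)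
    (n : ℕ → ℝ) (hpos : ∀ i, 0 < n i) (hmono : StrictMono n)
    (hgrow : ∀ i, n (i + 1) ≤ (1 + ξ) * n i)
    (N : ℝ) (T : Ω' → ℝ)
    (hTval : ∀ ω, ∃ i, T ω = n i) (hT1 : ∀ ω, n 1 ≤ T ω)
    (htail : ∀ i, N ≤ n i →
      (ℙ {ω | T ω > n i}).toReal ≤ Real.exp (-(γ * n i * Δ ^ 2 / 4)))
    (hN : Real.exp (-(γ * (N + 1) * Δ ^ 2 / 4)) ≤ ε * Real.exp (-(γ * Δ ^ 2 / 4))) :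
    ∫ ω, T ω ∂ℙ ≤ (1 + ξ) * (N + 4 * ε / (γ * Δ ^ 2)) :=
  stmt8_general ℙ γ Δ ε ξ hγ hΔ hξ n hpos hmono hgrow N T hTval hT1 htail hN
end
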